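/- Let B be a left semi-brace. Then E is an ideal of B if and only if e∘g = g + e for all e ∈ E and g ∈ G. -/
import Mathlib


/-- A left semi-brace: `(B,+)` is a left cancellative semigroup, `(B,*)` is a group
(whose identity `1` plays the role of `0` in the additive notation of the paper, and
`a⁻¹` plays the role of `a⁻`), and `a ∘ (b + c) = a ∘ b + a ∘ (a⁻ + c)` holds. -/
class LeftSemiBrace (B : Type*) extends Group B, Add B where
  add_assoc : ∀ a b c : B, a + b + c = a + (b + c)
  add_left_cancel : ∀ a b c : B, a + b = a + c → b = c
  circ_add : ∀ a b c : B, a * (b + c) = a * b + a * (a⁻¹ + c)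

namespace LeftSemiBrace

variable {B : Type*} [LeftSemiBrace B]

/-- The set `E` of additive idempotents. -/
def E (B : Type*) [LeftSemiBrace B] : Set B := {e | e + e = e}

/-- The set `G = B + 0`. -/
def G (B : Type*) [LeftSemiBrace B] : Set B := {x | ∃ b : B, x = b + 1}

/-- `λ_a (b) = a ∘ (a⁻ + b)`. -/
def lam (a b : B) : B := a * (a⁻¹ + b)

/-- `ρ_b (a) = (a⁻ + b)⁻ ∘ b`. -/
def rho (b a : B) : B := (a⁻¹ + b)⁻¹ * b

/-- `a · b = λ_a(a⁻) + a ∘ b + λ_b(b⁻)`. -/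
def dot (a b : B) : B := lam a a⁻¹ + a * b + lam b b⁻¹

/-- The group part `g_b = b + 0` of an element `b`. -/
def gp (b : B) : B := b + 1

/-- The additive inverse (within the group `(G,+)`) of the group part of an element:
for `g ∈ G` one has `neg g = -g`, since `-g_a = λ_a(a⁻) = a ∘ (a⁻ + a⁻)`. -/
def neg (a : B) : B := a * (a⁻¹ + a⁻¹)

/-- The idempotent part `e_b = -g_b + b` of an element `b`. -/
def ep (b : B) : B := neg (gp b) + b

/-- `S` is a subsemigroup of `(B,+)`. -/
def IsAddSubsemigroup (S : Set B) : Prop := ∀ x ∈ S, ∀ y ∈ S, x + y ∈ S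

/-- `S` is a subgroup of the multiplicative group `(B,∘)`. -/
def IsCircSubgroup (S : Set B) : Prop :=
  (1 : B) ∈ S ∧ (∀ x ∈ S, ∀ y ∈ S, x * y ∈ S) ∧ ∀ x ∈ S, x⁻¹ ∈ S

/-- `S` is a normal subgroup of the multiplicative group `(B,∘)`. -/
def IsCircNormal (S : Set B) : Prop :=
  IsCircSubgroup S ∧ ∀ x ∈ S, ∀ b : B, b * x * b⁻¹ ∈ S

/-- `S` is a subgroup of the group `(G,+)`. -/
def IsAddSubgroupOfG (S : Set B) : Prop :=
  S ⊆ G B ∧ (1 : B) ∈ S ∧ (∀ x ∈ S, ∀ y ∈ S, x + y ∈ S) ∧ ∀ x ∈ S, neg x ∈ S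

/-- `S` is a normal subgroup of the group `(G,+)`. -/
def IsAddNormalSubgroupOfG (S : Set B) : Prop :=
  IsAddSubgroupOfG S ∧ ∀ g ∈ G B, ∀ x ∈ S, g + x + neg g ∈ S

/-- `I` is an ideal of the left semi-brace `B` (Definition 17 of Catino–Colazzo–Stefanelli):
`I` is a subsemigroup of `(B,+)`, a normal subgroup of `(B,∘)`, `I ∩ G` is a normal
subgroup of `(G,+)`, `ρ_b(n) ∈ I` for all `b ∈ B`, `n ∈ I ∩ G`, and `λ_g(e) ∈ I` for all
`g ∈ G`, `e ∈ I ∩ E`. -/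
def IsIdeal (I : Set B) : Prop :=
  IsAddSubsemigroup I ∧ IsCircNormal I ∧ IsAddNormalSubgroupOfG (I ∩ G B) ∧
    (∀ b : B, ∀ n ∈ I ∩ G B, rho b n ∈ I) ∧
    (∀ g ∈ G B, ∀ e ∈ I ∩ E B, lam g e ∈ I)

/-- `I` is a left ideal of the left semi-brace `B`. -/
def IsLeftIdeal (I : Set B) : Prop :=
  (∀ x ∈ I, x + 1 ∈ I) ∧ IsAddSubgroupOfG (I ∩ G B) ∧
    (∀ g ∈ G B, ∀ x ∈ I, lam g x ∈ I) ∧ IsCircSubgroup I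

/-- The subgroup of `(G,+)` generated by a subset `S` of `G`. -/
def addClosure (S : Set B) : Set B :=
  ⋂₀ {T : Set B | S ⊆ T ∧ (1 : B) ∈ T ∧ (∀ x ∈ T, ∀ y ∈ T, x + y ∈ T) ∧ ∀ x ∈ T, neg x ∈ T}

/-- `X · Y`: the subgroup of `(G,+)` generated by `{x · y : x ∈ X, y ∈ Y}`. -/
def dotSet (X Y : Set B) : Set B := addClosure {z | ∃ x ∈ X, ∃ y ∈ Y, z = dot x y}

/-- `S + E = {s + e : s ∈ S, e ∈ E}`. -/
def addE (S : Set B) : Set B := {z | ∃ s ∈ S, ∃ e ∈ E B, z = s + e}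

/-- The right series of `B`: `rightSeries B n = B^(n+1)`, where `B^(1) = B` and
`B^(n+1) = B^(n) · B + E`. -/
def rightSeries (B : Type*) [LeftSemiBrace B] : ℕ → Set B
  | 0 => Set.univ
  | n + 1 => addE (dotSet (rightSeries B n) Set.univ)

/-- The left series of `B`: `leftSeries B n = B^(n+1)`, where `B^1 = B` and
`B^(n+1) = B · B^n + E`. -/
def leftSeries (B : Type*) [LeftSemiBrace B] : ℕ → Set B
  | 0 => Set.univ
  | n + 1 => addE (dotSet Set.univ (leftSeries B n))

/-- The right series of the skew left brace `G`: `rightSeriesG B n = G^(n+1)`, where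
`G^(1) = G` and `G^(n+1) = G^(n) · G`. -/
def rightSeriesG (B : Type*) [LeftSemiBrace B] : ℕ → Set B
  | 0 => G B
  | n + 1 => dotSet (rightSeriesG B n) (G B)

/-- The series `bracketSeries B n = B^[n+1]`, where `B^[1] = B` and `B^[n+1] = H_n + E`
with `H_n` the subgroup of `(G,+)` generated by `⋃_{i=1}^{n} B^[i] · B^[n+1-i]`. -/
def bracketSeries (B : Type*) [LeftSemiBrace B] : ℕ → Set B
  | 0 => Set.univ
  | n + 1 =>
      addE (addClosure (⋃ i : Fin (n + 1),
        dotSet (bracketSeries B i.1) (bracketSeries B (n - i.1))))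
  decreasing_by
  · exact i.isLt
  · exact Nat.lt_succ_of_le (Nat.sub_le n i.1)

/-- The socle `Soc(B) = {a ∈ B : ρ_a = ρ_0, λ_a = λ_0}`. -/
def Soc (B : Type*) [LeftSemiBrace B] : Set B :=
  {a | rho a = rho (1 : B) ∧ lam a = lam (1 : B)}

/-- The generalized socle `Zoc(B) = Soc(B) + E`. -/
def Zoc (B : Type*) [LeftSemiBrace B] : Set B :=
  {z | ∃ a ∈ Soc B, ∃ e ∈ E B, z = a + e}

/-- The lower central series of the group `(G,+)`:  `γ_1 = G` and `γ_{n+1}` is the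
subgroup of `(G,+)` generated by the additive commutators `-x - y + x + y` with
`x ∈ γ_n`, `y ∈ G`. -/
def lowerCentralSeriesG (B : Type*) [LeftSemiBrace B] : ℕ → Set B
  | 0 => G B
  | n + 1 => addClosure
      {z | ∃ x ∈ lowerCentralSeriesG B n, ∃ y ∈ G B, z = neg x + neg y + x + y}

/-- The group `(G,+)` is nilpotent. -/
def IsNilpotentGAdd (B : Type*) [LeftSemiBrace B] : Prop :=
  ∃ n : ℕ, lowerCentralSeriesG B n = {(1 : B)}

section Aux

lemma aassoc (a b c : B) : a + b + c = a + (b + c) := LeftSemiBrace.add_assoc a b c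

lemma acancel {a b c : B} (h : a + b = a + c) : b = c :=
  LeftSemiBrace.add_left_cancel a b c h

lemma one_add (a : B) : (1 : B) + a = a := by
  have h := LeftSemiBrace.circ_add (1 : B) 1 a
  simp only [one_mul, inv_one] at h
  exact (acancel h).symm

lemma mul_eq (a c : B) : a * c = a + lam a c := by
  have h := LeftSemiBrace.circ_add a 1 c
  rw [one_add, mul_one] at h
  exact h

lemma add_lam (a b c : B) : a * b + lam a c = a * (b + c) :=
  (LeftSemiBrace.circ_add a b c).symm

lemma E_left (e : B) (he : e ∈ E B) (x : B) : e + x = x := by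
  have h : e + (e + x) = e + x := by rw [← aassoc]; exact congrArg (· + x) he
  exact acancel h

lemma add_neg (a : B) : a + neg a = 1 := by
  have h := mul_eq a a⁻¹
  rw [mul_inv_cancel] at h
  exact h.symm

lemma lam_E (a e : B) (he : e ∈ E B) : lam a e ∈ E B := by
  show lam a e + lam a e = lam a e
  have h := add_lam a (a⁻¹ + e) e
  rw [aassoc] at h
  have he' : e + e = e := he
  rw [he'] at h
  exact h

lemma lam_lam (a b x : B) : lam a (lam b x) = lam (a * b) x := by
  apply acancel (a := a * b)
  have h1 : a * (b * x) = a * b + lam a (lam b x) := by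
    rw [mul_eq b x, ← add_lam]
  have h2 : a * b * x = a * b + lam (a * b) x := mul_eq _ _
  rw [← h1, ← h2, mul_assoc]

lemma lam_one (x : B) : lam (1 : B) x = x := by
  show (1 : B) * ((1 : B)⁻¹ + x) = x
  rw [inv_one, one_mul, one_add]

lemma mem_G_iff (x : B) : x ∈ G B ↔ x + 1 = x := by
  constructor
  · rintro ⟨b, rfl⟩
    rw [aassoc, one_add]
  · intro h; exact ⟨x, h.symm⟩

lemma one_mem_G : (1 : B) ∈ G B := (mem_G_iff 1).2 (one_add 1)

lemma E_one : (1 : B) ∈ E B := one_add 1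

lemma mem_E_of {x : B} (h : x + 1 = 1) : x ∈ E B := by
  show x + x = x
  have hx : x = x + x := by
    conv_lhs => rw [← one_add x, ← h]
    rw [aassoc, one_add]
  exact hx.symm

lemma neg_of_E {e : B} (he : e ∈ E B) : neg e = 1 := by
  have h := add_neg e
  rwa [E_left e he] at h

lemma E_inv {e : B} (he : e ∈ E B) : e⁻¹ ∈ E B := by
  have h : e * (e⁻¹ + e⁻¹) = e * e⁻¹ := by
    rw [mul_inv_cancel]; exact neg_of_E he
  show e⁻¹ + e⁻¹ = e⁻¹
  exact mul_left_cancel h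

lemma E_mul {e f : B} (he : e ∈ E B) (hf : f ∈ E B) : e * f ∈ E B := by
  have h : e * f = lam e f := by rw [mul_eq, E_left e he]
  rw [h]; exact lam_E e f hf

lemma lam_of_E {e : B} (he : e ∈ E B) (x : B) : lam e x = e * x := by
  show e * (e⁻¹ + x) = e * x
  rw [E_left e⁻¹ (E_inv he) x]

lemma neg_mem_G {g : B} (hg : g ∈ G B) : neg g ∈ G B := by
  rw [mem_G_iff]
  apply acancel (a := g)
  rw [← aassoc, add_neg, one_add]

lemma neg_neg_G {g : B} (hg : g ∈ G B) : neg (neg g) = g := by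
  calc neg (neg g) = 1 + neg (neg g) := (one_add _).symm
    _ = g + neg g + neg (neg g) := by rw [add_neg]
    _ = g + (neg g + neg (neg g)) := aassoc _ _ _
    _ = g + 1 := by rw [add_neg]
    _ = g := (mem_G_iff g).1 hg

lemma neg_add {g : B} (hg : g ∈ G B) : neg g + g = 1 := by
  have h := add_neg (neg g)
  rwa [neg_neg_G hg] at h

lemma neg_one : neg (1 : B) = 1 := neg_of_E E_one

lemma EG {x : B} (hx : x ∈ E B ∩ G B) : x = 1 := by
  have h1 : x + 1 = 1 := E_left x hx.1 1
  have h2 : x + 1 = x := (mem_G_iff x).1 hx.2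
  exact h2.symm.trans h1

lemma decomp (b : B) : ∃ g ∈ G B, ∃ f ∈ E B, b = g * f := by
  have hgG : b + 1 ∈ G B := ⟨b, rfl⟩
  have hep : neg (b + 1) + b ∈ E B := by
    apply mem_E_of
    rw [aassoc]
    exact neg_add hgG
  refine ⟨b + 1, hgG, lam (b + 1)⁻¹ (neg (b + 1) + b), lam_E _ _ hep, ?_⟩
  rw [mul_eq, lam_lam, mul_inv_cancel, lam_one, ← aassoc, add_neg, one_add]

lemma normal_step {e : B} (he : e ∈ E B)
    (N : ∀ x ∈ E B, ∀ b : B, b * x * b⁻¹ ∈ E B) {h : B} (hh : h ∈ G B) :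
    ∃ f ∈ E B, e * h = h + f := by
  have hf : h⁻¹ * e * h ∈ E B := by
    have := N e he h⁻¹
    rwa [inv_inv] at this
  refine ⟨lam h (h⁻¹ * e * h), lam_E _ _ hf, ?_⟩
  have hcomm : h * (h⁻¹ * e * h) = e * h := by group
  rw [← hcomm, mul_eq]

lemma circ_eq_add {e : B} (he : e ∈ E B)
    (N : ∀ x ∈ E B, ∀ b : B, b * x * b⁻¹ ∈ E B) {g : B} (hg : g ∈ G B) :
    e * g = g + e := by
  have key : ∀ k ∈ G B, e * neg k = neg k + e := by
    intro k hk
    obtain ⟨f1, hf1, h1⟩ := normal_step he N hk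
    obtain ⟨f2, hf2, h2⟩ := normal_step he N (neg_mem_G hk)
    have dagger : e * k + e * neg k = e := by
      have hd := add_lam e k (neg k)
      rw [lam_of_E he, add_neg, mul_one] at hd
      exact hd
    have hef2 : e = f2 := by
      rw [h1, h2, aassoc, E_left f1 hf1, ← aassoc, add_neg, one_add] at dagger
      exact dagger.symm
    rw [h2, ← hef2]
  have h := key (neg g) (neg_mem_G hg)
  rwa [neg_neg_G hg] at h

lemma normal_of_comm (H : ∀ e ∈ E B, ∀ g ∈ G B, e * g = g + e) :
    ∀ x ∈ E B, ∀ b : B, b * x * b⁻¹ ∈ E B := by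
  have key : ∀ g ∈ G B, ∀ y ∈ E B, g * y * g⁻¹ ∈ E B := by
    intro g hg y hy
    have hz : lam g y ∈ E B := lam_E g y hy
    have h1 : lam g y * g = g * y := by
      rw [H _ hz g hg, ← mul_eq]
    have h2 : g * y * g⁻¹ = lam g y := by rw [← h1]; group
    rw [h2]; exact hz
  intro x hx b
  obtain ⟨g, hg, f, hf, rfl⟩ := decomp b
  have h1 : f * x * f⁻¹ ∈ E B := E_mul (E_mul hf hx) (E_inv hf)
  have h2 := key g hg _ h1
  have h3 : g * f * x * (g * f)⁻¹ = g * (f * x * f⁻¹) * g⁻¹ := by group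
  rw [h3]; exact h2

end Aux

/-- `E` is an ideal of `B` iff `e∘g = g + e` for all `e ∈ E`,
`g ∈ G`. -/
theorem E_isIdeal_iff_circ_add (B : Type*) [LeftSemiBrace B] :
    IsIdeal (E B) ↔ ∀ e ∈ E B, ∀ g ∈ G B, e * g = g + e := by
  constructor
  · rintro ⟨-, ⟨-, hN⟩, -, -, -⟩ e he g hg
    exact circ_eq_add he hN hg
  · intro H
    refine ⟨?_, ⟨⟨E_one, fun x hx y hy => E_mul hx hy, fun x hx => E_inv hx⟩,
      normal_of_comm H⟩, ⟨⟨fun x hx => hx.2, ⟨E_one, one_mem_G⟩, ?_, ?_⟩, ?_⟩, ?_, ?_⟩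
    · -- additive subsemigroup
      intro x hx y hy
      rw [E_left x hx y]; exact hy
    · -- closure of E ∩ G under +
      intro x hx y hy
      rw [EG hx, EG hy, one_add]
      exact ⟨E_one, one_mem_G⟩
    · -- closure of E ∩ G under neg
      intro x hx
      rw [EG hx, neg_one]
      exact ⟨E_one, one_mem_G⟩
    · -- normality of E ∩ G in (G,+)
      intro g hg x hx
      rw [EG hx, (mem_G_iff g).1 hg, add_neg]
      exact ⟨E_one, one_mem_G⟩
    · -- rho condition
      intro b n hn
      rw [EG hn]
      have h : rho b 1 = 1 := by
        show ((1 : B)⁻¹ + b)⁻¹ * b = 1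
        rw [inv_one, one_add, inv_mul_cancel]
      rw [h]; exact E_one
    · -- lam condition
      intro g hg e he
      exact lam_E g e he.1

end LeftSemiBrace
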